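/- Let G be a finite nilpotent group and let k ≥ 2 be an integer. Then G is totally k-closed if and only if every Sylow subgroup of G is totally k-closed. -/

import Mathlib

/-- The `k`-closure of a subgroup `G ≤ Sym(Ω)` (Wielandt's characterization): the set of
permutations `x` such that for every `k`-tuple there is a `g ∈ G` agreeing with `x` on it. -/
def kClosure {Ω : Type*} (k : ℕ) (G : Subgroup (Equiv.Perm Ω)) : Subgroup (Equiv.Perm Ω) where
  carrier := {x | ∀ α : Fin k → Ω, ∃ g ∈ G, ∀ i, x (α i) = g (α i)}
  one_mem' := fun α => ⟨1, G.one_mem, fun _ => rfl⟩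
  mul_mem' := by
    intro x y hx hy α
    obtain ⟨g, hg, hgy⟩ := hy α
    obtain ⟨g', hg', hgx⟩ := hx (fun i => y (α i))
    refine ⟨g' * g, G.mul_mem hg' hg, fun i => ?_⟩
    simp only [Equiv.Perm.mul_apply]
    rw [hgx i, hgy i]
  inv_mem' := by
    intro x hx α
    obtain ⟨g, hg, hgx⟩ := hx (fun i => x⁻¹ (α i))
    refine ⟨g⁻¹, G.inv_mem hg, fun i => ?_⟩
    have h := hgx i
    simp only [Equiv.Perm.coe_inv, Equiv.apply_symm_apply] at h
    exact Equiv.Perm.eq_inv_iff_eq.mpr h.symm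

/-- A finite group is totally `k`-closed if the image of every faithful permutation
representation on a finite set equals its own `k`-closure. -/
def IsTotallyKClosed (k : ℕ) (G : Type*) [Group G] : Prop :=
  ∀ (Ω : Type) [Fintype Ω] (φ : G →* Equiv.Perm Ω), Function.Injective φ →
    kClosure k φ.range = φ.range

/-!
A finite nilpotent group is the direct product of its Sylow subgroups, whose orders are
pairwise coprime, so it suffices to see that total `k`-closure passes to direct factors and to
direct products of groups of coprime orders.

For a factor `H` of `H × K`: a faithful action of `H` on `Ω` extends to a faithful action of
`H × K` on `Ω ⊕ K`, with `K` acting regularly on itself, and an element of the `k`-closure of the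
image of `H`, extended by the identity, lies in the `k`-closure of the image of `H × K`.

For `H × K` with coprime orders: the image is `P ⊔ Q` with `P`, `Q` commuting and of coprime
element orders. If `p * q` fixes a point, so does `q`, a power of `p * q`. Hence for `x` in the
`k`-closure of `P ⊔ Q`, the point `q ω` in any decomposition `x ω = p (q ω)` depends only on `ω`.
The resulting map agrees with an element of `Q` on every `k`-tuple, so (being injective as
`k ≥ 2`) it is a permutation in the `k`-closure of `Q`, which is `Q`; symmetrically for `P`, and
`x` is the product of the two.
-/

open Equiv Function

section kClosure

variable {Ω : Type*} {k : ℕ}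

theorem le_kClosure (H : Subgroup (Perm Ω)) : H ≤ kClosure k H :=
  fun g hg _ => ⟨g, hg, fun _ => rfl⟩

theorem kClosure_bot (hk : 1 ≤ k) : kClosure k (⊥ : Subgroup (Perm Ω)) = ⊥ := by
  refine le_antisymm (fun x hx => ?_) (le_kClosure _)
  rw [Subgroup.mem_bot]
  ext ω
  obtain ⟨g, hg, hgx⟩ := hx fun _ => ω
  rw [Subgroup.mem_bot.mp hg] at hgx
  exact hgx ⟨0, hk⟩

theorem exists_mem_eq_pair (hk : 2 ≤ k) {H : Subgroup (Perm Ω)} {f : Ω → Ω}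
    (hf : ∀ α : Fin k → Ω, ∃ g ∈ H, ∀ i, f (α i) = g (α i)) (a b : Ω) :
    ∃ g ∈ H, f a = g a ∧ f b = g b := by
  obtain ⟨g, hg, hfg⟩ := hf fun i => if (i : ℕ) = 0 then a else b
  exact ⟨g, hg, by simpa using hfg ⟨0, by omega⟩, by simpa using hfg ⟨1, by omega⟩⟩

theorem exists_mem_kClosure_coe_eq [Finite Ω] (hk : 2 ≤ k) {H : Subgroup (Perm Ω)} {f : Ω → Ω}
    (hf : ∀ α : Fin k → Ω, ∃ g ∈ H, ∀ i, f (α i) = g (α i)) :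
    ∃ σ ∈ kClosure k H, ⇑σ = f := by
  have hinj : Injective f := fun a b hab => by
    obtain ⟨g, -, hga, hgb⟩ := exists_mem_eq_pair hk hf a b
    exact g.injective (by rw [← hga, ← hgb, hab])
  exact ⟨ofBijective f (Finite.injective_iff_bijective.mp hinj), hf, rfl⟩

end kClosure

theorem Commute.exists_pow_mul_eq_right {G : Type*} [Group G] {a b : G} (h : Commute a b)
    (hco : (orderOf a).Coprime (orderOf b)) : ∃ n : ℕ, (a * b) ^ n = b := by
  obtain ⟨n, hna, hnb⟩ := Nat.chineseRemainder hco 0 1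
  refine ⟨n, ?_⟩
  rw [h.mul_pow, orderOf_dvd_iff_pow_eq_one.mp (Nat.modEq_zero_iff_dvd.mp hna), one_mul,
    pow_eq_pow_iff_modEq.mpr hnb, pow_one]

theorem Equiv.Perm.apply_eq_self_of_mul_apply_eq_self {Ω : Type*} {a b : Perm Ω}
    (h : Commute a b) (hco : (orderOf a).Coprime (orderOf b)) {ω : Ω} (hab : a (b ω) = ω) :
    b ω = ω := by
  obtain ⟨n, hn⟩ := h.exists_pow_mul_eq_right hco
  rw [← hn]
  exact Perm.pow_apply_eq_self_of_apply_eq_self hab n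

section CommutingCoprime

variable {Ω : Type*} {P Q : Subgroup (Perm Ω)}

theorem apply_eq_of_mul_apply_eq (hcomm : ∀ p ∈ P, ∀ q ∈ Q, Commute p q)
    (hcop : ∀ p ∈ P, ∀ q ∈ Q, (orderOf p).Coprime (orderOf q)) {p p' q q' : Perm Ω}
    (hp : p ∈ P) (hp' : p' ∈ P) (hq : q ∈ Q) (hq' : q' ∈ Q) {ω : Ω}
    (h : p (q ω) = p' (q' ω)) : q ω = q' ω := by
  have hu : p'⁻¹ * p ∈ P := P.mul_mem (P.inv_mem hp') hp
  have hv : q'⁻¹ * q ∈ Q := Q.mul_mem (Q.inv_mem hq') hq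
  have hfix : (p'⁻¹ * p) ((q'⁻¹ * q) ω) = ω := by
    have huq' : Commute (p'⁻¹ * p) q'⁻¹ := (hcomm _ hu q' hq').inv_right
    rw [← Perm.mul_apply, ← mul_assoc, huq'.eq]
    simp [h]
  have := Perm.apply_eq_self_of_mul_apply_eq_self (hcomm _ hu _ hv) (hcop _ hu _ hv) hfix
  rwa [Perm.mul_apply, Perm.inv_eq_iff_eq] at this

theorem exists_mul_eq_of_mem_sup (hcomm : ∀ p ∈ P, ∀ q ∈ Q, Commute p q) {g : Perm Ω}
    (hg : g ∈ P ⊔ Q) : ∃ p ∈ P, ∃ q ∈ Q, p * q = g := by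
  have hle : P ≤ Subgroup.normalizer (Q : Set (Perm Ω)) := fun p hp =>
    Subgroup.centralizer_le_normalizer _
      (Subgroup.mem_centralizer_iff.mpr fun q hq => (hcomm p hp q hq).eq.symm)
  rwa [← SetLike.mem_coe, Subgroup.coe_mul_of_left_le_normalizer_right P Q hle] at hg

variable {k : ℕ} [Finite Ω]

theorem exists_mem_kClosure_right_component (hk : 2 ≤ k)
    (hcomm : ∀ p ∈ P, ∀ q ∈ Q, Commute p q)
    (hcop : ∀ p ∈ P, ∀ q ∈ Q, (orderOf p).Coprime (orderOf q)) {x : Perm Ω}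
    (hx : x ∈ kClosure k (P ⊔ Q)) :
    ∃ y ∈ kClosure k Q, ∀ p ∈ P, ∀ q ∈ Q, ∀ ω, x ω = p (q ω) → y ω = q ω := by
  have hdec : ∀ α : Fin k → Ω, ∃ p ∈ P, ∃ q ∈ Q, ∀ i, x (α i) = p (q (α i)) := fun α => by
    obtain ⟨g, hg, hxg⟩ := hx α
    obtain ⟨p, hp, q, hq, rfl⟩ := exists_mul_eq_of_mem_sup hcomm hg
    exact ⟨p, hp, q, hq, hxg⟩
  choose p hp q hq hpq using fun ω : Ω => hdec fun _ => ω
  have hq_eq : ∀ p' ∈ P, ∀ q' ∈ Q, ∀ ω, x ω = p' (q' ω) → q ω ω = q' ω :=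
    fun p' hp' q' hq' ω h => apply_eq_of_mul_apply_eq hcomm hcop (hp ω) hp' (hq ω) hq'
      ((hpq ω ⟨0, by omega⟩).symm.trans h)
  obtain ⟨y, hy, hyq⟩ := exists_mem_kClosure_coe_eq hk (f := fun ω => q ω ω) fun α => by
    obtain ⟨p', hp', q', hq', h⟩ := hdec α
    exact ⟨q', hq', fun i => hq_eq p' hp' q' hq' _ (h i)⟩
  exact ⟨y, hy, hyq ▸ hq_eq⟩

theorem kClosure_sup_eq (hk : 2 ≤ k) (hcomm : ∀ p ∈ P, ∀ q ∈ Q, Commute p q)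
    (hcop : ∀ p ∈ P, ∀ q ∈ Q, (orderOf p).Coprime (orderOf q))
    (hP : kClosure k P = P) (hQ : kClosure k Q = Q) : kClosure k (P ⊔ Q) = P ⊔ Q := by
  refine le_antisymm (fun x hx => ?_) (le_kClosure _)
  obtain ⟨y, hy, hyx⟩ := exists_mem_kClosure_right_component hk hcomm hcop hx
  obtain ⟨z, hz, hzx⟩ := exists_mem_kClosure_right_component hk
    (fun q hq p hp => (hcomm p hp q hq).symm) (fun q hq p hp => (hcop p hp q hq).symm)
    (sup_comm P Q ▸ hx)
  have hxyz : x = y * z := by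
    ext ω
    obtain ⟨g, hg, hxω, hxzω⟩ := exists_mem_eq_pair hk hx ω (z ω)
    obtain ⟨p, hp, q, hq, rfl⟩ := exists_mul_eq_of_mem_sup hcomm hg
    have hqp : x ω = q (p ω) := by rw [hxω, (hcomm p hp q hq).eq]; rfl
    rw [Perm.mul_apply, hyx p hp q hq _ hxzω, hzx q hq p hp ω hqp, hqp]
  rw [hxyz, ← hP, ← hQ]
  exact mul_mem (Subgroup.mem_sup_right hy) (Subgroup.mem_sup_left hz)

end CommutingCoprime

section TotallyKClosed

variable {k : ℕ} {G H K : Type*} [Group G] [Group H] [Group K]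

theorem IsTotallyKClosed.congr (h : IsTotallyKClosed k G) (e : G ≃* H) : IsTotallyKClosed k H :=
  fun Ω _ φ hφ => by
    have hrange : (φ.comp e.toMonoidHom).range = φ.range := by
      rw [MonoidHom.range_comp, MonoidHom.range_eq_top.mpr e.surjective, ← MonoidHom.range_eq_map]
    simpa only [hrange] using h Ω (φ.comp e.toMonoidHom) (hφ.comp e.injective)

theorem isTotallyKClosed_congr (e : G ≃* H) : IsTotallyKClosed k G ↔ IsTotallyKClosed k H :=
  ⟨fun h => h.congr e, fun h => h.congr e.symm⟩

theorem isTotallyKClosed_of_subsingleton [Subsingleton G] (hk : 1 ≤ k) : IsTotallyKClosed k G :=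
  fun _ _ φ _ => by
    rw [MonoidHom.range_eq_bot_iff.mpr (Subsingleton.elim φ 1), kClosure_bot hk]

theorem IsTotallyKClosed.prod [Finite H] [Finite K] (hk : 2 ≤ k)
    (hcop : (Nat.card H).Coprime (Nat.card K)) (hH : IsTotallyKClosed k H)
    (hK : IsTotallyKClosed k K) : IsTotallyKClosed k (H × K) := by
  intro Ω _ φ hφ
  have hrange : φ.range = (φ.comp (.inl H K)).range ⊔ (φ.comp (.inr H K)).range := by
    refine le_antisymm ?_ (sup_le ?_ ?_)
    · rintro _ ⟨g, rfl⟩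
      rw [← Prod.fst_mul_snd g, map_mul]
      exact mul_mem (Subgroup.mem_sup_left ⟨g.1, rfl⟩) (Subgroup.mem_sup_right ⟨g.2, rfl⟩)
    all_goals rintro _ ⟨g, rfl⟩; exact ⟨_, rfl⟩
  rw [hrange]
  refine kClosure_sup_eq hk ?_ ?_ (hH Ω _ (hφ.comp (Prod.mk_left_injective 1)))
    (hK Ω _ (hφ.comp (Prod.mk_right_injective 1)))
  · rintro _ ⟨a, rfl⟩ _ ⟨b, rfl⟩
    exact (MonoidHom.commute_inl_inr a b).map φ
  · rintro _ ⟨a, rfl⟩ _ ⟨b, rfl⟩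
    refine Nat.Coprime.of_dvd ?_ ?_ hcop
    · exact (orderOf_map_dvd _ a).trans (orderOf_dvd_natCard a)
    · exact (orderOf_map_dvd _ b).trans (orderOf_dvd_natCard b)

theorem IsTotallyKClosed.of_prod_left [Finite K] (h : IsTotallyKClosed k (H × K)) :
    IsTotallyKClosed k H := by
  intro Ω _ φ hφ
  refine le_antisymm (fun x hx => ?_) (le_kClosure _)
  obtain hΩ | ⟨⟨ω₀⟩⟩ := isEmpty_or_nonempty Ω
  · rw [Subsingleton.elim x 1]
    exact one_mem _
  let e := Finite.equivFin K
  let ψ : H × K →* Perm (Ω ⊕ Fin (Nat.card K)) := (Perm.sumCongrHom _ _).comp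
    (φ.prodMap (e.permCongrHom.toMonoidHom.comp (MulAction.toPermHom K K)))
  have hψ : Injective ψ := Perm.sumCongrHom_injective.comp
    (hφ.prodMap (e.permCongrHom.injective.comp MulAction.toPerm_injective))
  have hx' : Perm.sumCongr x 1 ∈ kClosure k ψ.range := fun α => by
    obtain ⟨_, ⟨a, rfl⟩, hxa⟩ := hx fun i => (α i).elim id fun _ => ω₀
    refine ⟨ψ (a, 1), ⟨(a, 1), rfl⟩, fun i => ?_⟩
    specialize hxa i
    cases hα : α i <;> simp_all [ψ]
  rw [h _ ψ hψ] at hx'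
  obtain ⟨⟨a, b⟩, hab⟩ := hx'
  exact ⟨a, Perm.ext fun ω => by simpa [ψ] using congr($hab (Sum.inl ω))⟩

end TotallyKClosed

def MulEquiv.piSplitAt {ι : Type*} [DecidableEq ι] (i : ι) (M : ι → Type*) [∀ j, Mul (M j)] :
    (∀ j, M j) ≃* M i × ∀ j : {j // j ≠ i}, M j :=
  { Equiv.piSplitAt i M with map_mul' := fun _ _ => rfl }

section Pi

variable {k : ℕ} {ι : Type*} [Finite ι] {M : ι → Type*} [∀ i, Group (M i)] [∀ i, Finite (M i)]

theorem IsTotallyKClosed.of_pi (h : IsTotallyKClosed k (∀ i, M i)) (i : ι) :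
    IsTotallyKClosed k (M i) := by
  classical
  exact (h.congr (MulEquiv.piSplitAt i M)).of_prod_left

theorem IsTotallyKClosed.pi (hk : 2 ≤ k)
    (hcop : Pairwise fun i j => (Nat.card (M i)).Coprime (Nat.card (M j)))
    (h : ∀ i, IsTotallyKClosed k (M i)) : IsTotallyKClosed k (∀ i, M i) := by
  classical
  induction hn : Nat.card ι generalizing ι with
  | zero =>
    have := Finite.card_eq_zero_iff.mp hn
    exact isTotallyKClosed_of_subsingleton (by omega)
  | succ n ih =>
    obtain ⟨i⟩ := Finite.card_pos_iff.mp (by rw [hn]; exact n.succ_pos)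
    have hrest : IsTotallyKClosed k (∀ j : {j // j ≠ i}, M j.1) := by
      refine ih (hcop.comp_of_injective Subtype.val_injective) (fun j => h j) ?_
      have := Nat.card_congr (Equiv.optionSubtypeNe i)
      rw [Finite.card_option] at this
      omega
    refine (isTotallyKClosed_congr (MulEquiv.piSplitAt i M)).mpr (.prod hk ?_ (h i) hrest)
    have := Fintype.ofFinite {j // j ≠ i}
    rw [Nat.card_pi]
    exact Nat.Coprime.prod_right fun j _ => hcop (Ne.symm j.2)

theorem isTotallyKClosed_pi_iff (hk : 2 ≤ k)
    (hcop : Pairwise fun i j => (Nat.card (M i)).Coprime (Nat.card (M j))) :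
    IsTotallyKClosed k (∀ i, M i) ↔ ∀ i, IsTotallyKClosed k (M i) :=
  ⟨IsTotallyKClosed.of_pi, IsTotallyKClosed.pi hk hcop⟩

end Pi

theorem Sylow.subsingleton_of_not_dvd {G : Type*} [Group G] [Finite G] {p : ℕ} [Fact p.Prime]
    (hp : ¬p ∣ Nat.card G) (P : Sylow p G) : Subsingleton P := by
  refine (Nat.card_eq_one_iff_unique.mp ?_).1
  rw [P.card_eq_multiplicity, Nat.factorization_eq_zero_of_not_dvd hp, pow_zero]

section Nilpotent

variable {G : Type*} [Group G] [Finite G] [Group.IsNilpotent G] {k : ℕ}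

theorem card_pi_sylow {p : ℕ} [Fact p.Prime] :
    Nat.card (∀ P : Sylow p G, P) = p ^ (Nat.card G).factorization p := by
  have : Unique (Sylow p G) := Sylow.unique_of_normal default inferInstance
  rw [Nat.card_congr (MulEquiv.piUnique _).toEquiv]
  exact Sylow.card_eq_multiplicity (p := p) _

theorem isTotallyKClosed_pi_sylow_iff {p : ℕ} [Fact p.Prime] :
    IsTotallyKClosed k (∀ P : Sylow p G, P) ↔
      ∀ P : Sylow p G, IsTotallyKClosed k ↥(P : Subgroup G) := by
  have : Unique (Sylow p G) := Sylow.unique_of_normal default inferInstance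
  exact (isTotallyKClosed_congr (MulEquiv.piUnique _)).trans
    (Unique.forall_iff (p := fun P : Sylow p G => IsTotallyKClosed k ↥(P : Subgroup G))).symm

end Nilpotent

/-- A finite nilpotent group is totally `k`-closed (`k ≥ 2`) iff all of its Sylow
subgroups are totally `k`-closed. -/
theorem totallyKClosed_iff_sylow (G : Type*) [Group G] [Finite G]
    (hnil : Group.IsNilpotent G) (k : ℕ) (hk : 2 ≤ k) :
    IsTotallyKClosed k G ↔
      ∀ (p : ℕ), p.Prime → ∀ P : Sylow p G, IsTotallyKClosed k ↥(P : Subgroup G) := by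
  have hprime (p : (Nat.card G).primeFactors) : Fact p.1.Prime :=
    ⟨Nat.prime_of_mem_primeFactors p.2⟩
  have hcop : Pairwise fun p q : (Nat.card G).primeFactors =>
      (Nat.card (∀ P : Sylow p G, P)).Coprime (Nat.card (∀ Q : Sylow q G, Q)) := fun p q hpq => by
    beta_reduce
    rw [card_pi_sylow, card_pi_sylow]
    exact Nat.coprime_pow_primes _ _ (hprime p).out (hprime q).out (Subtype.coe_ne_coe.mpr hpq)
  rw [← isTotallyKClosed_congr (Sylow.directProductOfNormal fun _ => inferInstance),
    isTotallyKClosed_pi_iff hk hcop]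
  simp only [isTotallyKClosed_pi_sylow_iff]
  refine ⟨fun h p hp P => ?_, fun h p => h p (hprime p).out⟩
  have : Fact p.Prime := ⟨hp⟩
  by_cases hpG : p ∣ Nat.card G
  · exact h ⟨p, Nat.mem_primeFactors.mpr ⟨hp, hpG, Nat.card_pos.ne'⟩⟩ P
  · have := P.subsingleton_of_not_dvd hpG
    exact isTotallyKClosed_of_subsingleton (by omega)
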